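/- (Probabilistic form of Lemma 1: confidence intervals of the output ticks of Protocol 1.) Assume the Protocol 1 model with parameters ε, ε_c ∈ [0,1], τ > 0, σ_c ∈ (0, τ), σ > 0, μ > 0, an integer m ≥ 1 with μ = (m + 1/2)·τ, P(X₁ ∈ (μ − σ/2, μ + σ/2)) ≥ 1 − ε, and σ < 2μ/3. Let j ≥ 1 be an integer with j < (τ − σ_c)/(σ_c + σ). Define the intervals C^in_i = (i·(μ − σ/2), i·(μ + σ/2)) for 0 ≤ i ≤ j, C^out_0 = ((τ − σ_c)/2, (τ + σ_c)/2), and C^out_i = (i·(μ − σ_c/2) + t^out_0, i·(μ + σ_c/2) + t^out_0) for 1 ≤ i ≤ j. Then the probability that t^in_i ∈ C^in_i and t^out_i ∈ C^out_i hold simultaneously for every i ∈ {0, 1, …, j} is at least (1 − ε)^j·(1 − ε_c)^{j+1} ≥ 1 − j·ε − (j+1)·ε_c. -/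

import Mathlib

open MeasureTheory ProbabilityTheory Pointwise

/-- A Markov kernel `κ` from `ℝ` to `ℝ` satisfies the `(τ, σc, εc)`-**stability
criterion** if for every switch-on phase `s ∈ (−(τ−σc)/2, (τ−σc)/2)`, the waiting-time
distribution `κ(s)` assigns probability at least `1 − εc` to the set of waiting times
`y` with `y + s ∈ ((τ−σc)/2, (τ+σc)/2)`. -/
def StabilityCriterion (κ : Kernel ℝ ℝ) (τ σc εc : ℝ) : Prop :=
  ∀ s ∈ Set.Ioo (-((τ - σc) / 2)) ((τ - σc) / 2),
    ENNReal.ofReal (1 - εc) ≤ κ s {y | y + s ∈ Set.Ioo ((τ - σc) / 2) ((τ + σc) / 2)}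

/-- The phase of a period-`τ` clock at time `x`: the unique `s ∈ (−τ/2, τ/2]` such
that `x − s` is an integer multiple of `τ`. -/
noncomputable def phase (τ x : ℝ) : ℝ := x - τ * ⌈x / τ - 1 / 2⌉

/-- The σ-algebra generated by the input waiting times `X` together with the output
tick times `tout 0, …, tout (i−1)`; the conditioning σ-algebra for the `i`-th draw of
the enhancing clock in Protocol 1. -/
def protocolPast {Ω : Type*} [MeasurableSpace Ω] (X : ℕ → Ω → ℝ)
    (tout : ℕ → Ω → ℝ) (i : ℕ) : MeasurableSpace Ω :=
  (⨆ k, MeasurableSpace.comap (X k) inferInstance) ⊔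
    ⨆ l, ⨆ (_ : l < i), MeasurableSpace.comap (tout l) inferInstance

/-- The switch-on phase of the enhancing clock at the arrival of the `i`-th
(relevant) input tick in Protocol 1:  `s₀ = 0` (the clock starts in the reset state),
and for `i ≥ 1`, `sᵢ = t^in_i − t^out_{i−1} − mᵢ·τ` with `mᵢ` the unique integer making
`sᵢ ∈ (−τ/2, τ/2]`. -/
noncomputable def protocolPhase {Ω : Type*} (τ : ℝ) (tin tout : ℕ → Ω → ℝ)
    (i : ℕ) (ω : Ω) : ℝ :=
  if i = 0 then 0 else phase τ (tin i ω - tout (i - 1) ω)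

/-- **The Protocol 1 model** (accuracy enhancement without feedback).  It consists of:
(i) an i.i.d. sequence `(X_k)` of a.s. positive real random variables (input tick
waiting times) whose common distribution puts weight at least `1 − ε` on
`(μ − σ/2, μ + σ/2)`, with input tick times `u_k = X_1 + ⋯ + X_k`;
(ii) a Markov kernel `κ` satisfying the `(τ, σc, εc)`-stability criterion of the
enhancing clock, whose detector-off evolution has period `τ = μ/(m + 1/2)`;
(iii) random variables `t^in_0 = 0, t^in_1, …, t^in_j` and `t^out_0, …, t^out_j` such
that conditionally on `(X_k)` the waiting time `t^out_0` has law `κ(0)`, and for each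
`1 ≤ i ≤ j`, `t^in_i = min{u_k : u_k > t^out_{i−1}}` and, conditionally on `(X_k)` and
`t^out_0, …, t^out_{i−1}`, the increment `t^out_i − t^in_i` has law `κ(sᵢ)` where `sᵢ`
is the phase of `t^in_i − t^out_{i−1}` modulo `τ`. -/
structure Protocol1Model {Ω : Type*} [MeasurableSpace Ω] (P : Measure Ω)
    (ε εc τ σc σ μ : ℝ) (m : ℕ) (κ : Kernel ℝ ℝ)
    (X : ℕ → Ω → ℝ) (tin tout : ℕ → Ω → ℝ) (j : ℕ) : Prop where
  hε : ε ∈ Set.Icc (0 : ℝ) 1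
  hεc : εc ∈ Set.Icc (0 : ℝ) 1
  hτ : 0 < τ
  hσc : σc ∈ Set.Ioo 0 τ
  hσ : 0 < σ
  hμ : 0 < μ
  hm : 1 ≤ m
  hμτ : μ = (m + 1 / 2) * τ
  measX : ∀ k, Measurable (X k)
  meas_tin : ∀ i, Measurable (tin i)
  meas_tout : ∀ i, Measurable (tout i)
  indep : iIndepFun X P
  ident : ∀ k, IdentDistrib (X k) (X 0) P P
  pos : ∀ k, ∀ᵐ ω ∂P, 0 < X k ω
  conf : ENNReal.ofReal (1 - ε) ≤ P {ω | X 0 ω ∈ Set.Ioo (μ - σ / 2) (μ + σ / 2)}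
  markov : IsMarkovKernel κ
  stable : StabilityCriterion κ τ σc εc
  tin_zero : ∀ ω, tin 0 ω = 0
  tin_def : ∀ i, 1 ≤ i → i ≤ j → ∀ ω,
    tin i ω = sInf {t | (∃ k, t = ∑ l ∈ Finset.range k, X l ω) ∧ tout (i - 1) ω < t}
  cond_law : ∀ i ≤ j, ∀ B : Set ℝ, MeasurableSet B →
    ∀ A : Set Ω, MeasurableSet[protocolPast X tout i] A →
      P (A ∩ {ω | tout i ω - tin i ω ∈ B}) =
        ∫⁻ ω in A, κ (protocolPhase τ tin tout i ω) B ∂P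

open Set
open scoped ENNReal

/-!
On the event that the first `j` input waiting times lie in `(μ - σ/2, μ + σ/2)` and the output
ticks before the `n`-th lie in their windows, the input tick following `t^out_{n-1}` is
`u_n = X_0 + ⋯ + X_{n-1}` and the switch-on phase equals `u_n - t^out_{n-1} - m τ`, which lies in
the stability window because `j (σc + σ) < τ - σc`. That phase is a function of the past, so the
conditional law of `t^out_n - t^in_n` given the past, together with the stability criterion, keeps
`t^out_n` in its window with conditional probability at least `1 - εc`. Starting from the event
of probability at least `(1 - ε)^j` given by independence and iterating `j + 1` times gives the
product bound; Bernoulli's inequality gives the linear one.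
-/

section ConditionalLaw

variable {Ω β : Type*} {m mΩ : MeasurableSpace Ω} [MeasurableSpace β] {P : Measure[mΩ] Ω}
  [IsFiniteMeasure P]

theorem measure_prodMk_mem_eq_lintegral (hm : m ≤ mΩ) {η : Kernel[m] Ω β} [IsSFiniteKernel η]
    {g : Ω → β} (hg : Measurable[mΩ] g)
    (law : ∀ B, MeasurableSet B → ∀ A, MeasurableSet[m] A →
      P (A ∩ {ω | g ω ∈ B}) = ∫⁻ ω in A, η ω B ∂P)
    {C : Set (Ω × β)} (hC : MeasurableSet[m.prod ‹_›] C) :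
    P {ω | (ω, g ω) ∈ C} = ∫⁻ ω, η ω (Prod.mk ω ⁻¹' C) ∂P := by
  have hgraph : @Measurable Ω (Ω × β) mΩ (m.prod ‹_›) fun ω => (ω, g ω) :=
    (measurable_id'' hm).prodMk hg
  have hjoint : @Measure.map Ω (Ω × β) mΩ (m.prod ‹_›) (fun ω => (ω, g ω)) P
      = P.trim hm ⊗ₘ η := by
    refine Measure.ext_prod fun {A B} hA hB => ?_
    rw [Measure.map_apply hgraph (hA.prod hB), Measure.compProd_apply_prod hA hB,
      setLIntegral_trim hm (η.measurable_coe hB) hA]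
    exact law B hB A hA
  calc P {ω | (ω, g ω) ∈ C} = (P.trim hm ⊗ₘ η) C := by
        rw [← hjoint, Measure.map_apply hgraph hC]; rfl
    _ = ∫⁻ ω, η ω (Prod.mk ω ⁻¹' C) ∂P.trim hm := Measure.compProd_apply hC
    _ = ∫⁻ ω, η ω (Prod.mk ω ⁻¹' C) ∂P := lintegral_trim hm (η.measurable_kernel_prodMk_left hC)

theorem mul_measure_le_measure_inter_add_mem (hm : m ≤ mΩ) {κ : Kernel ℝ ℝ} [IsSFiniteKernel κ]
    {D φ ψ : Ω → ℝ} (hD : Measurable[mΩ] D) (hφ : Measurable[m] φ)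
    {A : Set Ω} (hA : MeasurableSet[m] A) (hψ : EqOn ψ φ A)
    (law : ∀ B, MeasurableSet B → ∀ A', MeasurableSet[m] A' →
      P (A' ∩ {ω | D ω ∈ B}) = ∫⁻ ω in A', κ (ψ ω) B ∂P)
    {I : Set ℝ} (hI : MeasurableSet I) {c : ℝ≥0∞}
    (hc : ∀ ω ∈ A, c ≤ κ (φ ω) {y | y + φ ω ∈ I}) :
    c * P A ≤ P (A ∩ {ω | D ω + φ ω ∈ I}) := by
  have hAΩ : MeasurableSet[mΩ] A := hm A hA
  have lawA : ∀ B, MeasurableSet B → ∀ A', MeasurableSet[m] A' →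
      P.restrict A (A' ∩ {ω | D ω ∈ B}) = ∫⁻ ω in A', κ.comap φ hφ ω B ∂P.restrict A := by
    intro B hB A' hA'
    rw [Measure.restrict_apply' hAΩ, Measure.restrict_restrict (hm A' hA'), inter_right_comm,
      law B hB _ (hA'.inter hA)]
    exact setLIntegral_congr_fun ((hm A' hA').inter hAΩ) fun ω hω => by rw [hψ hω.2]; rfl
  have hC : MeasurableSet[m.prod inferInstance] {p : Ω × ℝ | p.2 + φ p.1 ∈ I} :=
    ((@measurable_snd Ω ℝ m _).add (hφ.comp (@measurable_fst Ω ℝ m _))) hI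
  calc c * P A = ∫⁻ _ in A, c ∂P := (setLIntegral_const A c).symm
    _ ≤ ∫⁻ ω in A, κ (φ ω) {y | y + φ ω ∈ I} ∂P := setLIntegral_mono' hAΩ hc
    _ = P.restrict A {ω | D ω + φ ω ∈ I} :=
        (measure_prodMk_mem_eq_lintegral hm hD lawA hC).symm
    _ = P (A ∩ {ω | D ω + φ ω ∈ I}) := by rw [Measure.restrict_apply' hAΩ, inter_comm]

end ConditionalLaw

theorem mem_Icc_of_mem_smul_Ioo {K : Type*} [Semiring K] [PartialOrder K] [IsOrderedRing K]
    {r a b x : K} (hr : 0 ≤ r) (hx : x ∈ r • Ioo a b) : x ∈ Icc (r * a) (r * b) := by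
  obtain ⟨y, hy, rfl⟩ := hx
  exact ⟨mul_le_mul_of_nonneg_left hy.1.le hr, mul_le_mul_of_nonneg_left hy.2.le hr⟩

theorem sum_range_mem_natCast_smul_Ioo {K : Type*} [Field K] [LinearOrder K]
    [IsStrictOrderedRing K] {a b : K} (hab : a < b) {x : ℕ → K} {k : ℕ}
    (hx : ∀ l < k, x l ∈ Ioo a b) : ∑ l ∈ Finset.range k, x l ∈ (k : K) • Ioo a b := by
  rcases Nat.eq_zero_or_pos k with rfl | hk
  · simp [zero_smul_set (nonempty_Ioo.2 hab)]
  rw [LinearOrderedField.smul_Ioo (Nat.cast_pos.2 hk)]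
  have hne : (Finset.range k).Nonempty := Finset.nonempty_range_iff.2 hk.ne'
  constructor
  · simpa using Finset.sum_lt_sum_of_nonempty hne fun l hl => (hx l (Finset.mem_range.1 hl)).1
  · simpa using Finset.sum_lt_sum_of_nonempty hne fun l hl => (hx l (Finset.mem_range.1 hl)).2

theorem csInf_setOf_gt_eq_of_monotone {α : Type*} [ConditionallyCompleteLinearOrder α]
    {u : ℕ → α} (hu : Monotone u) {w : α} {k : ℕ} (hk : u k ≤ w) (hk' : w < u (k + 1)) :
    sInf {t | (∃ i, t = u i) ∧ w < t} = u (k + 1) := by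
  refine IsLeast.csInf_eq ⟨⟨⟨k + 1, rfl⟩, hk'⟩, ?_⟩
  rintro t ⟨⟨i, rfl⟩, hi⟩
  exact hu (hu.reflect_lt (hk.trans_lt hi))

theorem one_sub_mul_sub_mul_le_pow_mul_pow {a b : ℝ} (ha : a ∈ Icc 0 1) (hb : b ∈ Icc 0 1)
    (p q : ℕ) : 1 - p * a - q * b ≤ (1 - a) ^ p * (1 - b) ^ q := by
  have hpa := one_add_mul_le_pow (by linarith [ha.2] : -2 ≤ -a) p
  have hqb := one_add_mul_le_pow (by linarith [hb.2] : -2 ≤ -b) q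
  have hpa1 : (1 - a) ^ p ≤ 1 := pow_le_one₀ (by linarith [ha.2]) (by linarith [ha.1])
  have hqb1 : (1 - b) ^ q ≤ 1 := pow_le_one₀ (by linarith [hb.2]) (by linarith [hb.1])
  rw [← sub_eq_add_neg] at hpa hqb
  nlinarith [mul_nonneg (sub_nonneg.2 hpa1) (sub_nonneg.2 hqb1)]

theorem phase_eq_sub_mul {τ x : ℝ} (hτ : 0 < τ) {n : ℤ}
    (hx : x - n * τ ∈ Ioc (-(τ / 2)) (τ / 2)) : phase τ x = x - n * τ := by
  have hdiv : x / τ - n = (x - n * τ) / τ := by field_simp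
  have hlo : -(1 / 2) < (x - n * τ) / τ := by rw [lt_div_iff₀ hτ]; linarith [hx.1]
  have hhi : (x - n * τ) / τ ≤ 1 / 2 := by rw [div_le_iff₀ hτ]; linarith [hx.2]
  have hceil : ⌈x / τ - 1 / 2⌉ = n := by
    rw [Int.ceil_eq_iff]
    constructor <;> linarith
  rw [phase, hceil, mul_comm]

theorem sub_sub_mem_Ioo_of_mem_windows {τ σc σ μ t₀ w v : ℝ} {m k : ℕ}
    (hμ : μ = (m + 1 / 2) * τ) (hk : (k + 1) * (σc + σ) < τ - σc)
    (ht₀ : t₀ ∈ Ioo ((τ - σc) / 2) ((τ + σc) / 2))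
    (hw : w ∈ Icc (k * (μ - σc / 2) + t₀) (k * (μ + σc / 2) + t₀))
    (hv : v ∈ Icc ((k + 1) * (μ - σ / 2)) ((k + 1) * (μ + σ / 2))) :
    v - w - m * τ ∈ Ioo (-((τ - σc) / 2)) ((τ - σc) / 2) := by
  subst hμ
  obtain ⟨ht₀l, ht₀r⟩ := ht₀
  obtain ⟨hwl, hwr⟩ := hw
  obtain ⟨hvl, hvr⟩ := hv
  constructor <;> linarith

theorem add_mem_Ioo_of_mem_window {τ σc μ t₀ w v y : ℝ} {m k : ℕ}
    (hμ : μ = (m + 1 / 2) * τ)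
    (hw : w ∈ Icc (k * (μ - σc / 2) + t₀) (k * (μ + σc / 2) + t₀))
    (hy : y + (v - w - m * τ) ∈ Ioo ((τ - σc) / 2) ((τ + σc) / 2)) :
    y + v ∈ Ioo ((k + 1) * (μ - σc / 2) + t₀) ((k + 1) * (μ + σc / 2) + t₀) := by
  subst hμ
  obtain ⟨hwl, hwr⟩ := hw
  obtain ⟨hyl, hyr⟩ := hy
  constructor <;> linarith

section Protocol1

variable {Ω : Type*}

def inputTick (X : ℕ → Ω → ℝ) (k : ℕ) (ω : Ω) : ℝ := ∑ l ∈ Finset.range k, X l ω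

def OutputWindow (τ σc μ : ℝ) (t : ℕ → ℝ) (i : ℕ) : Prop :=
  if i = 0 then t i ∈ Ioo ((τ - σc) / 2) ((τ + σc) / 2)
  else t i ∈ Ioo (i * (μ - σc / 2) + t 0) (i * (μ + σc / 2) + t 0)

theorem OutputWindow.mem_Icc {τ σc μ : ℝ} {t : ℕ → ℝ} {k : ℕ} (h : OutputWindow τ σc μ t k) :
    t k ∈ Icc (k * (μ - σc / 2) + t 0) (k * (μ + σc / 2) + t 0) := by
  rcases eq_or_ne k 0 with rfl | hk
  · simp
  · rw [OutputWindow, if_neg hk] at h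
    exact Ioo_subset_Icc_self h

def confidenceEvent (τ σc σ μ : ℝ) (X tout : ℕ → Ω → ℝ) (j n : ℕ) : Set Ω :=
  {ω | (∀ k, 0 < X k ω) ∧ (∀ k < j, X k ω ∈ Ioo (μ - σ / 2) (μ + σ / 2)) ∧
    ∀ i < n, OutputWindow τ σc μ (tout · ω) i}

theorem confidenceEvent_anti {τ σc σ μ : ℝ} {X tout : ℕ → Ω → ℝ} {j : ℕ} :
    Antitone (confidenceEvent τ σc σ μ X tout j) :=
  fun _ _ hnn' _ hω => ⟨hω.1, hω.2.1, fun i hi => hω.2.2 i (hi.trans_le hnn')⟩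

/-- On `confidenceEvent … n` the switch-on phase `protocolPhase τ tin tout n` agrees with this
function, which, unlike `tin n`, is measurable with respect to `protocolPast X tout n`. -/
def nominalPhase (τ : ℝ) (m : ℕ) (X tout : ℕ → Ω → ℝ) : ℕ → Ω → ℝ
  | 0, _ => 0
  | k + 1, ω => inputTick X (k + 1) ω - tout k ω - m * τ

variable [MeasurableSpace Ω] {X tout : ℕ → Ω → ℝ}

theorem measurable_protocolPast_X (n k : ℕ) : Measurable[protocolPast X tout n] (X k) :=
  measurable_iff_comap_le.2 <| le_sup_of_le_left <|
    le_iSup (fun k => MeasurableSpace.comap (X k) inferInstance) k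

theorem measurable_protocolPast_tout {n l : ℕ} (hl : l < n) :
    Measurable[protocolPast X tout n] (tout l) :=
  measurable_iff_comap_le.2 <| le_sup_of_le_right <| le_iSup₂_of_le (f := fun l (_ : l < n) =>
    MeasurableSpace.comap (tout l) inferInstance) l hl le_rfl

theorem protocolPast_le (hX : ∀ k, Measurable (X k)) (htout : ∀ l, Measurable (tout l)) (n : ℕ) :
    protocolPast X tout n ≤ ‹MeasurableSpace Ω› :=
  sup_le (iSup_le fun k => (hX k).comap_le) (iSup₂_le fun l _ => (htout l).comap_le)

theorem measurableSet_confidenceEvent (τ σc σ μ : ℝ) (j n : ℕ) :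
    MeasurableSet[protocolPast X tout n] (confidenceEvent τ σc σ μ X tout j n) := by
  have hX : ∀ k, Measurable[protocolPast X tout n] (X k) := measurable_protocolPast_X n
  have hout : ∀ i < n,
      MeasurableSet[protocolPast X tout n] {ω | OutputWindow τ σc μ (tout · ω) i} := by
    intro i hi
    have ht : Measurable[protocolPast X tout n] (tout i) := measurable_protocolPast_tout hi
    rcases eq_or_ne i 0 with rfl | hi0
    · exact ht measurableSet_Ioo
    · have ht₀ : Measurable[protocolPast X tout n] (tout 0) :=
        measurable_protocolPast_tout ((Nat.pos_of_ne_zero hi0).trans hi)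
      simp only [OutputWindow, if_neg hi0, mem_Ioo, ofPred_and]
      exact (measurableSet_lt (measurable_const.add ht₀) ht).inter
        (measurableSet_lt ht (measurable_const.add ht₀))
  simp only [confidenceEvent, ofPred_and, ofPred_forall]
  exact (MeasurableSet.iInter fun k => measurableSet_lt measurable_const (hX k)).inter
    ((MeasurableSet.iInter fun k => MeasurableSet.iInter fun _ => hX k measurableSet_Ioo).inter
      (MeasurableSet.iInter fun i => MeasurableSet.iInter fun hi => hout i hi))

theorem measurable_nominalPhase (τ : ℝ) (m n : ℕ) :
    Measurable[protocolPast X tout n] (nominalPhase τ m X tout n) := by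
  cases n with
  | zero => exact measurable_const
  | succ k =>
    exact ((Finset.measurable_sum _ fun l _ => measurable_protocolPast_X _ l).sub
      (measurable_protocolPast_tout k.lt_succ_self)).sub_const _

end Protocol1

namespace Protocol1Model

variable {Ω : Type*} [MeasurableSpace Ω] {P : Measure Ω} {ε εc τ σc σ μ : ℝ} {m : ℕ}
  {κ : Kernel ℝ ℝ} {X tin tout : ℕ → Ω → ℝ} {j : ℕ}

theorem tin_succ_eq_and_nominalPhase_mem (h : Protocol1Model P ε εc τ σc σ μ m κ X tin tout j)
    (hj : (j : ℝ) < (τ - σc) / (σc + σ)) {k : ℕ} (hk : k + 1 ≤ j) {ω : Ω}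
    (hω : ω ∈ confidenceEvent τ σc σ μ X tout j (k + 1)) :
    tin (k + 1) ω = inputTick X (k + 1) ω ∧
      nominalPhase τ m X tout (k + 1) ω ∈ Ioo (-((τ - σc) / 2)) ((τ - σc) / 2) := by
  obtain ⟨hpos, hX, hout⟩ := hω
  have hkj : ((k : ℝ) + 1) * (σc + σ) < τ - σc := by
    rw [lt_div_iff₀ (by linarith [h.hσ, h.hσc.1])] at hj
    have : (k : ℝ) + 1 ≤ j := by exact_mod_cast hk
    nlinarith [h.hσ, h.hσc.1]
  have ht₀ : tout 0 ω ∈ Ioo ((τ - σc) / 2) ((τ + σc) / 2) := hout 0 k.succ_pos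
  have hw := (hout k k.lt_succ_self).mem_Icc
  have hu : ∀ n ≤ j, inputTick X n ω ∈ Icc (n * (μ - σ / 2)) (n * (μ + σ / 2)) :=
    fun n hn => mem_Icc_of_mem_smul_Ioo n.cast_nonneg <|
      sum_range_mem_natCast_smul_Ioo (by linarith [h.hσ]) fun l hl => hX l (hl.trans_le hn)
  have hv := hu (k + 1) hk
  push_cast at hv
  have hwin := sub_sub_mem_Ioo_of_mem_windows h.hμτ hkj ht₀ hw hv
  refine ⟨?_, hwin⟩
  have hmτ : τ ≤ m * τ := le_mul_of_one_le_left h.hτ.le (by exact_mod_cast h.hm)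
  rw [h.tin_def (k + 1) k.succ_pos hk ω]
  refine csInf_setOf_gt_eq_of_monotone (u := (inputTick X · ω))
    ((Finset.sum_mono_set_of_nonneg fun l => (hpos l).le).comp Finset.range_mono) ?_ ?_
  · change inputTick X k ω ≤ tout k ω
    linarith [(hu k (by omega)).2, hw.1, ht₀.1, h.hσ, h.hσc.1]
  · change tout k ω < inputTick X (k + 1) ω
    linarith [hwin.1, hmτ, h.hτ, h.hσc.1]

theorem nominalPhase_mem (h : Protocol1Model P ε εc τ σc σ μ m κ X tin tout j)
    (hj : (j : ℝ) < (τ - σc) / (σc + σ)) {n : ℕ} (hn : n ≤ j) {ω : Ω}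
    (hω : ω ∈ confidenceEvent τ σc σ μ X tout j n) :
    nominalPhase τ m X tout n ω ∈ Ioo (-((τ - σc) / 2)) ((τ - σc) / 2) := by
  cases n with
  | zero =>
    show (0 : ℝ) ∈ Ioo _ _
    constructor <;> linarith [h.hσc.2]
  | succ k => exact (h.tin_succ_eq_and_nominalPhase_mem hj hn hω).2

theorem protocolPhase_eq_nominalPhase (h : Protocol1Model P ε εc τ σc σ μ m κ X tin tout j)
    (hj : (j : ℝ) < (τ - σc) / (σc + σ)) {n : ℕ} (hn : n ≤ j) {ω : Ω}
    (hω : ω ∈ confidenceEvent τ σc σ μ X tout j n) :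
    protocolPhase τ tin tout n ω = nominalPhase τ m X tout n ω := by
  cases n with
  | zero => rfl
  | succ k =>
    obtain ⟨htin, hwin⟩ := h.tin_succ_eq_and_nominalPhase_mem hj hn hω
    simp only [nominalPhase] at hwin ⊢
    rw [protocolPhase, if_neg k.succ_ne_zero, Nat.add_sub_cancel, htin]
    refine phase_eq_sub_mul (n := m) h.hτ ?_
    push_cast
    exact ⟨by linarith [hwin.1, h.hσc.1], by linarith [hwin.2, h.hσc.1]⟩

theorem confidenceEvent_inter_subset (h : Protocol1Model P ε εc τ σc σ μ m κ X tin tout j)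
    (hj : (j : ℝ) < (τ - σc) / (σc + σ)) {n : ℕ} (hn : n ≤ j) :
    confidenceEvent τ σc σ μ X tout j n ∩ {ω | tout n ω - tin n ω + nominalPhase τ m X tout n ω ∈
      Ioo ((τ - σc) / 2) ((τ + σc) / 2)} ⊆ confidenceEvent τ σc σ μ X tout j (n + 1) := by
  rintro ω ⟨hω, hI⟩
  refine ⟨hω.1, hω.2.1, fun i hi => ?_⟩
  rcases Nat.lt_succ_iff_lt_or_eq.1 hi with hi | rfl
  · exact hω.2.2 i hi
  cases i with
  | zero => simpa [OutputWindow, nominalPhase, h.tin_zero] using hI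
  | succ k =>
    rw [mem_ofPred_eq, (h.tin_succ_eq_and_nominalPhase_mem hj hn hω).1] at hI
    have := add_mem_Ioo_of_mem_window h.hμτ (hω.2.2 k k.lt_succ_self).mem_Icc hI
    rw [OutputWindow, if_neg k.succ_ne_zero]
    push_cast
    rwa [sub_add_cancel] at this

theorem ofReal_mul_measure_confidenceEvent_le [IsFiniteMeasure P]
    (h : Protocol1Model P ε εc τ σc σ μ m κ X tin tout j)
    (hj : (j : ℝ) < (τ - σc) / (σc + σ)) {n : ℕ} (hn : n ≤ j) :
    ENNReal.ofReal (1 - εc) * P (confidenceEvent τ σc σ μ X tout j n) ≤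
      P (confidenceEvent τ σc σ μ X tout j (n + 1)) := by
  have := h.markov
  calc _ ≤ P (confidenceEvent τ σc σ μ X tout j n ∩ {ω | tout n ω - tin n ω +
        nominalPhase τ m X tout n ω ∈ Ioo ((τ - σc) / 2) ((τ + σc) / 2)}) :=
        mul_measure_le_measure_inter_add_mem (protocolPast_le h.measX h.meas_tout n)
          ((h.meas_tout n).sub (h.meas_tin n)) (measurable_nominalPhase τ m n)
          (measurableSet_confidenceEvent τ σc σ μ j n)
          (fun ω hω => h.protocolPhase_eq_nominalPhase hj hn hω) (h.cond_law n hn)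
          measurableSet_Ioo fun ω hω => h.stable _ (h.nominalPhase_mem hj hn hω)
    _ ≤ _ := measure_mono (h.confidenceEvent_inter_subset hj hn)

theorem ofReal_pow_le_measure_confidenceEvent_zero
    (h : Protocol1Model P ε εc τ σc σ μ m κ X tin tout j) :
    ENNReal.ofReal ((1 - ε) ^ j) ≤ P (confidenceEvent τ σc σ μ X tout j 0) := by
  have hE : confidenceEvent τ σc σ μ X tout j 0 =ᵐ[P]
      ⋂ k ∈ Finset.range j, X k ⁻¹' Ioo (μ - σ / 2) (μ + σ / 2) := by
    refine Filter.eventuallyEq_set.2 ?_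
    filter_upwards [ae_all_iff.2 h.pos] with ω hω
    simp [confidenceEvent, hω]
  rw [measure_congr hE, h.indep.meas_biInter fun k _ => ⟨_, measurableSet_Ioo, rfl⟩,
    ENNReal.ofReal_pow (by linarith [h.hε.2])]
  calc ENNReal.ofReal (1 - ε) ^ j = ∏ _k ∈ Finset.range j, ENNReal.ofReal (1 - ε) := by
        rw [Finset.prod_const, Finset.card_range]
    _ ≤ _ := Finset.prod_le_prod' fun k _ =>
        (h.ident k).measure_mem_eq measurableSet_Ioo ▸ h.conf

theorem ofReal_le_measure_confidenceEvent [IsFiniteMeasure P]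
    (h : Protocol1Model P ε εc τ σc σ μ m κ X tin tout j)
    (hj : (j : ℝ) < (τ - σc) / (σc + σ)) {n : ℕ} (hn : n ≤ j + 1) :
    ENNReal.ofReal ((1 - ε) ^ j * (1 - εc) ^ n) ≤ P (confidenceEvent τ σc σ μ X tout j n) := by
  induction n with
  | zero => simpa using h.ofReal_pow_le_measure_confidenceEvent_zero
  | succ n ih =>
    calc ENNReal.ofReal ((1 - ε) ^ j * (1 - εc) ^ (n + 1))
        = ENNReal.ofReal (1 - εc) * ENNReal.ofReal ((1 - ε) ^ j * (1 - εc) ^ n) := by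
          rw [← ENNReal.ofReal_mul (by linarith [h.hεc.2]), pow_succ]
          ring_nf
      _ ≤ ENNReal.ofReal (1 - εc) * P (confidenceEvent τ σc σ μ X tout j n) := by
          gcongr
          exact ih (by omega)
      _ ≤ _ := h.ofReal_mul_measure_confidenceEvent_le hj (by omega)

theorem confidenceEvent_subset (h : Protocol1Model P ε εc τ σc σ μ m κ X tin tout j)
    (hj : (j : ℝ) < (τ - σc) / (σc + σ)) :
    confidenceEvent τ σc σ μ X tout j (j + 1) ⊆ {ω | ∀ i ≤ j,
      tin i ω ∈ (i : ℝ) • Ioo (μ - σ / 2) (μ + σ / 2) ∧ OutputWindow τ σc μ (tout · ω) i} := by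
  intro ω hω i hi
  refine ⟨?_, hω.2.2 i (Nat.lt_succ_of_le hi)⟩
  cases i with
  | zero =>
    rw [h.tin_zero, Nat.cast_zero, zero_smul_set (nonempty_Ioo.2 (by linarith [h.hσ]))]
    rfl
  | succ k =>
    rw [(h.tin_succ_eq_and_nominalPhase_mem hj hi
      (confidenceEvent_anti (by omega) hω)).1]
    exact sum_range_mem_natCast_smul_Ioo (by linarith [h.hσ]) fun l hl => hω.2.1 l (by omega)

end Protocol1Model

theorem protocol1_confidence_intervals_general {Ω : Type*} [MeasurableSpace Ω]
    (P : Measure Ω) [IsProbabilityMeasure P]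
    (ε εc τ σc σ μ : ℝ) (m : ℕ) (κ : Kernel ℝ ℝ)
    (X : ℕ → Ω → ℝ) (tin tout : ℕ → Ω → ℝ) (j : ℕ)
    (hmodel : Protocol1Model P ε εc τ σc σ μ m κ X tin tout j)
    (hjlt : (j : ℝ) < (τ - σc) / (σc + σ)) :
    ENNReal.ofReal (1 - j * ε - (j + 1) * εc) ≤
        ENNReal.ofReal ((1 - ε) ^ j * (1 - εc) ^ (j + 1)) ∧
      ENNReal.ofReal ((1 - ε) ^ j * (1 - εc) ^ (j + 1)) ≤
        P {ω | ∀ i ≤ j,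
          tin i ω ∈ (i : ℝ) • Set.Ioo (μ - σ / 2) (μ + σ / 2) ∧
          (if i = 0 then
              tout i ω ∈ Set.Ioo ((τ - σc) / 2) ((τ + σc) / 2)
            else
              tout i ω ∈ Set.Ioo (i * (μ - σc / 2) + tout 0 ω)
                (i * (μ + σc / 2) + tout 0 ω))} :=
  ⟨ENNReal.ofReal_le_ofReal (by
      exact_mod_cast one_sub_mul_sub_mul_le_pow_mul_pow hmodel.hε hmodel.hεc j (j + 1)),
    (hmodel.ofReal_le_measure_confidenceEvent hjlt le_rfl).trans
      (measure_mono (hmodel.confidenceEvent_subset hjlt))⟩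

/-- **Confidence intervals of the output ticks of Protocol 1** (probabilistic form of
Lemma 1).  Assume the Protocol 1 model with `μ = (m + 1/2)·τ`,
`P(X₁ ∈ (μ − σ/2, μ + σ/2)) ≥ 1 − ε` and `σ < 2μ/3`, and let `j ≥ 1` be an integer
with `j < (τ − σc)/(σc + σ)`.  With `C^in_i = (i·(μ − σ/2), i·(μ + σ/2))`,
`C^out_0 = ((τ − σc)/2, (τ + σc)/2)` and
`C^out_i = (i·(μ − σc/2) + t^out_0, i·(μ + σc/2) + t^out_0)` for `1 ≤ i ≤ j`, the
probability that `t^in_i ∈ C^in_i` and `t^out_i ∈ C^out_i` hold simultaneously for all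
`0 ≤ i ≤ j` is at least `(1 − ε)^j·(1 − εc)^{j+1} ≥ 1 − j·ε − (j+1)·εc`. -/
theorem protocol1_confidence_intervals {Ω : Type*} [MeasurableSpace Ω]
    (P : Measure Ω) [IsProbabilityMeasure P]
    (ε εc τ σc σ μ : ℝ) (m : ℕ) (κ : Kernel ℝ ℝ)
    (X : ℕ → Ω → ℝ) (tin tout : ℕ → Ω → ℝ) (j : ℕ)
    (hmodel : Protocol1Model P ε εc τ σc σ μ m κ X tin tout j)
    (hσμ : σ < 2 * μ / 3) (hj : 1 ≤ j)
    (hjlt : (j : ℝ) < (τ - σc) / (σc + σ)) :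
    ENNReal.ofReal (1 - j * ε - (j + 1) * εc) ≤
        ENNReal.ofReal ((1 - ε) ^ j * (1 - εc) ^ (j + 1)) ∧
      ENNReal.ofReal ((1 - ε) ^ j * (1 - εc) ^ (j + 1)) ≤
        P {ω | ∀ i ≤ j,
          tin i ω ∈ (i : ℝ) • Set.Ioo (μ - σ / 2) (μ + σ / 2) ∧
          (if i = 0 then
              tout i ω ∈ Set.Ioo ((τ - σc) / 2) ((τ + σc) / 2)
            else
              tout i ω ∈ Set.Ioo (i * (μ - σc / 2) + tout 0 ω)
                (i * (μ + σc / 2) + tout 0 ω))} :=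
  protocol1_confidence_intervals_general P ε εc τ σc σ μ m κ X tin tout j hmodel hjlt
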